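/- arXiv:1802.01226 — 9 statements merged into one kernel-verified Lean document; each statement's English description precedes it below -/
import Mathlib

section
/- Soundness of the Darboux equality rule (dbx): Let f be a polynomial vector field on ℝⁿ, let Q ⊆ ℝⁿ, and let p, g be polynomials such that L_f(p)(x) = g(x)·p(x) for every x ∈ Q. If φ : [0,T] → ℝⁿ is a solution of x' = f(x) with φ(t) ∈ Q for all t ∈ [0,T] and p(φ(0)) = 0, then p(φ(t)) = 0 for all t ∈ [0,T]. -/
/-!
Along a solution `φ`, the chain rule gives `(p ∘ φ)' = L_f(p) ∘ φ`, which by the Darboux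
hypothesis equals `(g ∘ φ) · (p ∘ φ)`. Since `g ∘ φ` is continuous, it is bounded on the compact
interval `[0, T]`, so `p ∘ φ` satisfies `|(p ∘ φ)'| ≤ K |p ∘ φ|` and vanishes at `0`; Grönwall's
inequality forces it to vanish on all of `[0, T]`.
-/

open MvPolynomial Set

/-- Lie derivative of polynomial `p` along the polynomial vector field `f`. -/
noncomputable def lieD {n : ℕ} (f : Fin n → MvPolynomial (Fin n) ℝ)
    (p : MvPolynomial (Fin n) ℝ) : MvPolynomial (Fin n) ℝ :=
  ∑ i, pderiv i p * f i

/-- `φ` is a solution of `x' = f(x)` on `[0,T]`. -/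
def IsSol {n : ℕ} (f : Fin n → MvPolynomial (Fin n) ℝ) (T : ℝ)
    (φ : ℝ → (Fin n → ℝ)) : Prop :=
  ∀ t ∈ Icc (0 : ℝ) T, HasDerivWithinAt φ (fun i => eval (φ t) (f i)) (Icc (0 : ℝ) T) t

namespace MvPolynomial

theorem hasDerivWithinAt_eval_comp {σ : Type*} [Fintype σ] {φ : ℝ → σ → ℝ}
    {v : σ → ℝ} {s : Set ℝ} {t : ℝ} (hφ : HasDerivWithinAt φ v s t) (p : MvPolynomial σ ℝ) :
    HasDerivWithinAt (fun u => eval (φ u) p) (∑ i, eval (φ t) (pderiv i p) * v i) s t := by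
  classical
  induction p using MvPolynomial.induction_on with
  | C a => simpa using hasDerivWithinAt_const t s a
  | add p q hp hq => simpa [add_mul, Finset.sum_add_distrib] using hp.fun_add hq
  | mul_X p i hp =>
    have h : HasDerivWithinAt (fun u => eval (φ u) p * φ u i) _ s t :=
      hp.mul (hasDerivWithinAt_pi.mp hφ i)
    simp only [eval_mul, eval_X]
    convert h using 1
    simp only [Derivation.leibniz, pderiv_X, smul_eq_mul, map_add, map_mul, eval_X]
    simp [Pi.single_apply, apply_ite (eval (φ t)), ite_mul, add_mul, Finset.sum_add_distrib,
      Finset.sum_mul]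
    rw [add_comm]
    congr 1
    exact Finset.sum_congr rfl fun j _ => by ring

end MvPolynomial

theorem IsSol.continuousOn {n : ℕ} {f : Fin n → MvPolynomial (Fin n) ℝ} {T : ℝ}
    {φ : ℝ → Fin n → ℝ} (hsol : IsSol f T φ) : ContinuousOn φ (Icc 0 T) :=
  fun t ht => (hsol t ht).continuousWithinAt

theorem IsSol.hasDerivWithinAt_eval {n : ℕ} {f : Fin n → MvPolynomial (Fin n) ℝ} {T : ℝ}
    {φ : ℝ → Fin n → ℝ} (hsol : IsSol f T φ) (p : MvPolynomial (Fin n) ℝ) {t : ℝ}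
    (ht : t ∈ Icc 0 T) :
    HasDerivWithinAt (fun u => eval (φ u) p) (eval (φ t) (lieD f p)) (Icc 0 T) t := by
  simpa [lieD] using hasDerivWithinAt_eval_comp (hsol t ht) p

theorem dbx_sound_general {n : ℕ} (f : Fin n → MvPolynomial (Fin n) ℝ)
    (Q : Set (Fin n → ℝ)) (p g : MvPolynomial (Fin n) ℝ)
    (hdbx : ∀ x ∈ Q, eval x (lieD f p) = eval x g * eval x p)
    (T : ℝ) (φ : ℝ → (Fin n → ℝ))
    (hsol : IsSol f T φ) (hQ : ∀ t ∈ Icc (0 : ℝ) T, φ t ∈ Q)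
    (h0 : eval (φ 0) p = 0) :
    ∀ t ∈ Icc (0 : ℝ) T, eval (φ t) p = 0 := by
  obtain ⟨K, hK⟩ := isCompact_Icc.exists_bound_of_continuousOn
    ((continuous_eval g).comp_continuousOn hsol.continuousOn)
  refine eq_zero_of_abs_deriv_le_mul_abs_self_of_eq_zero_right (K := K)
    (fun t ht => (hsol.hasDerivWithinAt_eval p ht).continuousWithinAt)
    (fun t ht => (hsol.hasDerivWithinAt_eval p (Ico_subset_Icc_self ht)).mono_of_mem_nhdsWithin
      (Icc_mem_nhdsGE_of_mem ht)) h0 fun t ht => ?_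
  have ht' := Ico_subset_Icc_self ht
  rw [hdbx _ (hQ t ht'), norm_mul]
  exact mul_le_mul_of_nonneg_right (hK t ht') (norm_nonneg _)

/-- Soundness of the Darboux equality rule (dbx). -/
theorem dbx_sound {n : ℕ} (hn : 1 ≤ n) (f : Fin n → MvPolynomial (Fin n) ℝ)
    (Q : Set (Fin n → ℝ)) (p g : MvPolynomial (Fin n) ℝ)
    (hdbx : ∀ x ∈ Q, eval x (lieD f p) = eval x g * eval x p)
    (T : ℝ) (hT : 0 ≤ T) (φ : ℝ → (Fin n → ℝ))
    (hsol : IsSol f T φ) (hQ : ∀ t ∈ Icc (0 : ℝ) T, φ t ∈ Q)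
    (h0 : eval (φ 0) p = 0) :
    ∀ t ∈ Icc (0 : ℝ) T, eval (φ t) p = 0 :=
  dbx_sound_general f Q p g hdbx T φ hsol hQ h0
end

section
/- Soundness of the Darboux inequality rule (dbx≽): Let f be a polynomial vector field on ℝⁿ, let Q ⊆ ℝⁿ, and let p, g be polynomials such that L_f(p)(x) ≥ g(x)·p(x) for every x ∈ Q. If φ : [0,T] → ℝⁿ is a solution of x' = f(x) with φ(t) ∈ Q for all t ∈ [0,T], then: if p(φ(0)) ≥ 0 then p(φ(t)) ≥ 0 for all t ∈ [0,T], and if p(φ(0)) > 0 then p(φ(t)) > 0 for all t ∈ [0,T]. -/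
/-!
With `y(t) = p(φ(t))` the hypothesis says `y' ≥ g(φ(t)) · y`. For a primitive `G` of `g ∘ φ`
the integrating factor gives `(y · e^{-G})' = (y' - (g ∘ φ) · y) · e^{-G} ≥ 0`, so `y · e^{-G}`
is monotone and `y(0) ≤ e^{-G(t)} y(t)` with `G(0) = 0`; the positive factor transfers both
`y(0) ≥ 0` and `y(0) > 0` to every `t`.
-/

open MvPolynomial Set

theorem MvPolynomial.hasDerivWithinAt_eval_comp_s1 {𝕜 σ : Type*} [NontriviallyNormedField 𝕜]
    [Fintype σ] {φ : 𝕜 → σ → 𝕜} {v : σ → 𝕜} {s : Set 𝕜} {t : 𝕜}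
    (hφ : HasDerivWithinAt φ v s t) (p : MvPolynomial σ 𝕜) :
    HasDerivWithinAt (fun τ => eval (φ τ) p) (∑ i, eval (φ t) (pderiv i p) * v i) s t := by
  induction p using MvPolynomial.induction_on with
  | C a => simpa using hasDerivWithinAt_const t s a
  | add p q hp hq => simpa [add_mul, Finset.sum_add_distrib] using hp.fun_add hq
  | mul_X p j hp =>
    classical
    simp only [map_mul, eval_X]
    refine (hp.fun_mul (hasDerivWithinAt_pi.1 hφ j)).congr_deriv ?_
    simp only [pderiv_mul, pderiv_X, map_add, map_mul, eval_X, add_mul, Finset.sum_add_distrib,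
      Finset.sum_mul]
    simp [Pi.single_apply, mul_right_comm]

theorem hasDerivWithinAt_eval_lieD {n : ℕ} {f : Fin n → MvPolynomial (Fin n) ℝ}
    {φ : ℝ → Fin n → ℝ} {s : Set ℝ} {t : ℝ}
    (hφ : HasDerivWithinAt φ (fun i => eval (φ t) (f i)) s t) (p : MvPolynomial (Fin n) ℝ) :
    HasDerivWithinAt (fun τ => eval (φ τ) p) (eval (φ t) (lieD f p)) s t := by
  simpa [lieD] using MvPolynomial.hasDerivWithinAt_eval_comp_s1 hφ p

theorem ContinuousOn.exists_hasDerivWithinAt_Icc {a b : ℝ} {g : ℝ → ℝ}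
    (hg : ContinuousOn g (Icc a b)) :
    ∃ G : ℝ → ℝ, G a = 0 ∧ ∀ t ∈ Icc a b, HasDerivWithinAt G (g t) (Icc a b) t := by
  rcases lt_or_ge b a with hba | hab
  · exact ⟨0, rfl, fun t ht => absurd (ht.1.trans ht.2) (not_le.2 hba)⟩
  set h := IccExtend hab ((Icc a b).domRestrict g)
  have hc : Continuous h := (continuousOn_iff_continuous_domRestrict.1 hg).Icc_extend'
  refine ⟨fun t => ∫ s in a..t, h s, intervalIntegral.integral_same, fun t ht => ?_⟩
  simpa [h, IccExtend_of_mem hab _ ht] using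
    (hc.integral_hasStrictDerivAt a t).hasDerivAt.hasDerivWithinAt

theorem monotoneOn_mul_exp_neg_of_mul_le_deriv {a b : ℝ} {y y' g G : ℝ → ℝ}
    (hy : ∀ t ∈ Icc a b, HasDerivWithinAt y (y' t) (Icc a b) t)
    (hG : ∀ t ∈ Icc a b, HasDerivWithinAt G (g t) (Icc a b) t)
    (hle : ∀ t ∈ Icc a b, g t * y t ≤ y' t) :
    MonotoneOn (fun t => y t * Real.exp (-G t)) (Icc a b) := by
  have hderiv : ∀ t ∈ Icc a b, HasDerivWithinAt (fun t => y t * Real.exp (-G t))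
      ((y' t - g t * y t) * Real.exp (-G t)) (Icc a b) t := fun t ht => by
    refine ((hy t ht).fun_mul (hG t ht).fun_neg.exp).congr_deriv ?_
    ring
  exact monotoneOn_of_hasDerivWithinAt_nonneg (convex_Icc a b)
    (fun t ht => (hderiv t ht).continuousWithinAt)
    (fun t ht => (hderiv t (interior_subset ht)).mono interior_subset) fun t ht =>
      mul_nonneg (sub_nonneg.2 (hle t (interior_subset ht))) (Real.exp_pos _).le

theorem exists_pos_mul_ge_of_mul_le_deriv {a b : ℝ} {y y' g : ℝ → ℝ}
    (hy : ∀ t ∈ Icc a b, HasDerivWithinAt y (y' t) (Icc a b) t)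
    (hg : ContinuousOn g (Icc a b)) (hle : ∀ t ∈ Icc a b, g t * y t ≤ y' t) :
    ∃ c : ℝ → ℝ, (∀ t, 0 < c t) ∧ ∀ t ∈ Icc a b, y a ≤ c t * y t := by
  obtain ⟨G, hGa, hG⟩ := hg.exists_hasDerivWithinAt_Icc
  refine ⟨fun t => Real.exp (-G t), fun t => Real.exp_pos _, fun t ht => ?_⟩
  simpa [hGa, mul_comm] using
    monotoneOn_mul_exp_neg_of_mul_le_deriv hy hG hle ⟨le_rfl, ht.1.trans ht.2⟩ ht ht.1

theorem dbx_ineq_sound_general {n : ℕ} (f : Fin n → MvPolynomial (Fin n) ℝ)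
    (Q : Set (Fin n → ℝ)) (p g : MvPolynomial (Fin n) ℝ)
    (hdbx : ∀ x ∈ Q, eval x g * eval x p ≤ eval x (lieD f p))
    (T : ℝ) (φ : ℝ → (Fin n → ℝ))
    (hsol : IsSol f T φ) (hQ : ∀ t ∈ Icc (0 : ℝ) T, φ t ∈ Q) :
    (0 ≤ eval (φ 0) p → ∀ t ∈ Icc (0 : ℝ) T, 0 ≤ eval (φ t) p) ∧
    (0 < eval (φ 0) p → ∀ t ∈ Icc (0 : ℝ) T, 0 < eval (φ t) p) := by
  have hφ : ContinuousOn φ (Icc 0 T) := fun t ht => (hsol t ht).continuousWithinAt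
  obtain ⟨c, hc, hle⟩ := exists_pos_mul_ge_of_mul_le_deriv
    (fun t ht => hasDerivWithinAt_eval_lieD (hsol t ht) p)
    ((continuous_eval g).comp_continuousOn hφ) fun t ht => hdbx _ (hQ t ht)
  exact ⟨fun h0 t ht => (mul_nonneg_iff_of_pos_left (hc t)).1 (h0.trans (hle t ht)),
    fun h0 t ht => (mul_pos_iff_of_pos_left (hc t)).1 (h0.trans_le (hle t ht))⟩

/-- Soundness of the Darboux inequality rule (dbx≽). -/
theorem dbx_ineq_sound {n : ℕ} (hn : 1 ≤ n) (f : Fin n → MvPolynomial (Fin n) ℝ)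
    (Q : Set (Fin n → ℝ)) (p g : MvPolynomial (Fin n) ℝ)
    (hdbx : ∀ x ∈ Q, eval x g * eval x p ≤ eval x (lieD f p))
    (T : ℝ) (hT : 0 ≤ T) (φ : ℝ → (Fin n → ℝ))
    (hsol : IsSol f T φ) (hQ : ∀ t ∈ Icc (0 : ℝ) T, φ t ∈ Q) :
    (0 ≤ eval (φ 0) p → ∀ t ∈ Icc (0 : ℝ) T, 0 ≤ eval (φ t) p) ∧
    (0 < eval (φ 0) p → ∀ t ∈ Icc (0 : ℝ) T, 0 < eval (φ t) p) :=
  dbx_ineq_sound_general f Q p g hdbx T φ hsol hQ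
end

section
/- Soundness of the differential radical invariant rule (dRI): Let f be a polynomial vector field on ℝⁿ, let Q ⊆ ℝⁿ, let p be a polynomial, let N ≥ 1, and let g₀,…,g_{N−1} be polynomials such that L_f^N(p)(x) = Σ_{i<N} gᵢ(x)·L_f^i(p)(x) for every x ∈ Q. If φ : [0,T] → ℝⁿ is a solution of x' = f(x) with φ(t) ∈ Q for all t ∈ [0,T] and L_f^i(p)(φ(0)) = 0 for every i < N, then p(φ(t)) = 0 for all t ∈ [0,T]. -/
open MvPolynomial Set

/-!
Along a solution `φ`, the vector `J(t)` of the first `N` Lie derivatives of `p` evaluated at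
`φ t` satisfies the linear system `J' = A(t) J`, where `A(t)` is the companion matrix of the
coefficients `gᵢ(φ t)`. These coefficients are bounded on the compact interval `[0, T]`, so
`‖J'‖ ≤ K ‖J‖`, and Grönwall's inequality with `J(0) = 0` forces `J ≡ 0`; its first entry is
`p(φ t)`.
-/

noncomputable def lieJet {n : ℕ} (f : Fin n → MvPolynomial (Fin n) ℝ)
    (p : MvPolynomial (Fin n) ℝ) (N : ℕ) (x : Fin n → ℝ) : Fin N → ℝ :=
  fun i => eval x ((lieD f)^[i] p)

section LieDerivative

variable {n : ℕ} (f : Fin n → MvPolynomial (Fin n) ℝ)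

lemma lieD_C (a : ℝ) : lieD f (C a) = 0 := by
  simp [lieD]

lemma lieD_add (p q : MvPolynomial (Fin n) ℝ) : lieD f (p + q) = lieD f p + lieD f q := by
  simp [lieD, add_mul, Finset.sum_add_distrib]

lemma lieD_mul_X (p : MvPolynomial (Fin n) ℝ) (j : Fin n) :
    lieD f (p * X j) = lieD f p * X j + p * f j := by
  classical
  simp only [lieD, pderiv_mul, add_mul, Finset.sum_add_distrib, Finset.sum_mul]
  congr 1
  · exact Finset.sum_congr rfl fun i _ => by ring
  · rw [Finset.sum_eq_single j (fun i _ hij => by simp [pderiv_X_of_ne (Ne.symm hij)])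
      (by simp)]
    simp

lemma lieJet_lieD_apply (p : MvPolynomial (Fin n) ℝ) {N : ℕ} (x : Fin n → ℝ) (i : Fin N) :
    lieJet f (lieD f p) N x i = eval x ((lieD f)^[i + 1] p) := by
  rw [lieJet, Function.iterate_succ_apply]

end LieDerivative

namespace IsSol

variable {n : ℕ} {f : Fin n → MvPolynomial (Fin n) ℝ} {T : ℝ} {φ : ℝ → (Fin n → ℝ)}

lemma continuousOn_s3 (hsol : IsSol f T φ) : ContinuousOn φ (Icc 0 T) :=
  fun t ht => (hsol t ht).continuousWithinAt

lemma hasDerivWithinAt_eval_s3 (hsol : IsSol f T φ) (q : MvPolynomial (Fin n) ℝ) {t : ℝ}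
    (ht : t ∈ Icc 0 T) :
    HasDerivWithinAt (fun s => eval (φ s) q) (eval (φ t) (lieD f q)) (Icc 0 T) t := by
  induction q using MvPolynomial.induction_on with
  | C a => simpa [lieD_C] using hasDerivWithinAt_const t (Icc 0 T) a
  | add p q hp hq => simpa [lieD_add] using hp.fun_add hq
  | mul_X p j hp =>
    have hφj : HasDerivWithinAt (fun s => φ s j) (eval (φ t) (f j)) (Icc 0 T) t :=
      hasDerivWithinAt_pi.mp (hsol t ht) j
    simpa [lieD_mul_X, mul_comm, mul_left_comm] using hp.fun_mul hφj

lemma hasDerivWithinAt_lieJet (hsol : IsSol f T φ) (p : MvPolynomial (Fin n) ℝ) (N : ℕ)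
    {t : ℝ} (ht : t ∈ Icc 0 T) :
    HasDerivWithinAt (fun s => lieJet f p N (φ s)) (lieJet f (lieD f p) N (φ t)) (Icc 0 T) t :=
  hasDerivWithinAt_pi.mpr fun i => by
    rw [lieJet_lieD_apply, Function.iterate_succ_apply']
    exact hsol.hasDerivWithinAt_eval_s3 _ ht

end IsSol

lemma abs_sum_mul_le_sum_abs_mul_norm {ι : Type*} [Fintype ι] (c y : ι → ℝ) :
    |∑ j, c j * y j| ≤ (∑ j, |c j|) * ‖y‖ := by
  calc |∑ j, c j * y j| ≤ ∑ j, |c j| * |y j| := by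
        simpa only [abs_mul] using Finset.abs_sum_le_sum_abs (fun j => c j * y j) Finset.univ
    _ ≤ ∑ j, |c j| * ‖y‖ :=
        Finset.sum_le_sum fun j _ => mul_le_mul_of_nonneg_left (norm_le_pi_norm y j) (abs_nonneg _)
    _ = (∑ j, |c j|) * ‖y‖ := (Finset.sum_mul ..).symm

/-- Under `hrank`, the shifted jet is the companion-matrix image `(J₁, …, J_{N-1}, ∑ gⱼ Jⱼ)`
of the jet `J`. -/
lemma norm_lieJet_lieD_le {n : ℕ} (f : Fin n → MvPolynomial (Fin n) ℝ)
    (p : MvPolynomial (Fin n) ℝ) {N : ℕ} (g : ℕ → MvPolynomial (Fin n) ℝ) {x : Fin n → ℝ}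
    (hrank : eval x ((lieD f)^[N] p) =
      ∑ i ∈ Finset.range N, eval x (g i) * eval x ((lieD f)^[i] p)) :
    ‖lieJet f (lieD f p) N x‖ ≤ max 1 (∑ j : Fin N, |eval x (g j)|) * ‖lieJet f p N x‖ := by
  refine pi_norm_le_iff_of_nonneg (by positivity) |>.mpr fun i => ?_
  rw [lieJet_lieD_apply]
  rcases lt_or_eq_of_le (Nat.add_one_le_of_lt i.2) with h | h
  · calc ‖eval x ((lieD f)^[i + 1] p)‖ = ‖lieJet f p N x ⟨i + 1, h⟩‖ := rfl
      _ ≤ ‖lieJet f p N x‖ := norm_le_pi_norm _ _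
      _ ≤ _ := le_mul_of_one_le_left (norm_nonneg _) (le_max_left _ _)
  · rw [h, hrank, ← Fin.sum_univ_eq_sum_range, Real.norm_eq_abs]
    exact (abs_sum_mul_le_sum_abs_mul_norm (fun j : Fin N => eval x (g j)) _).trans <|
      mul_le_mul_of_nonneg_right (le_max_right _ _) (norm_nonneg _)

theorem dRI_sound_general {n : ℕ} (f : Fin n → MvPolynomial (Fin n) ℝ)
    (Q : Set (Fin n → ℝ)) (p : MvPolynomial (Fin n) ℝ)
    (N : ℕ) (hN : 1 ≤ N) (g : ℕ → MvPolynomial (Fin n) ℝ)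
    (hrank : ∀ x ∈ Q,
      eval x ((lieD f)^[N] p) = ∑ i ∈ Finset.range N, eval x (g i) * eval x ((lieD f)^[i] p))
    (T : ℝ) (φ : ℝ → (Fin n → ℝ))
    (hsol : IsSol f T φ) (hQ : ∀ t ∈ Icc (0 : ℝ) T, φ t ∈ Q)
    (h0 : ∀ i < N, eval (φ 0) ((lieD f)^[i] p) = 0) :
    ∀ t ∈ Icc (0 : ℝ) T, eval (φ t) p = 0 := by
  obtain ⟨C, hC⟩ : ∃ C, ∀ t ∈ Icc 0 T, ∑ j : Fin N, |eval (φ t) (g j)| ≤ C := by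
    have hcont : ContinuousOn (fun t => ∑ j : Fin N, |eval (φ t) (g j)|) (Icc 0 T) :=
      continuousOn_finsetSum _ fun j _ =>
        ((continuous_eval (g j)).comp_continuousOn hsol.continuousOn_s3).abs
    obtain ⟨C, hC⟩ := isCompact_Icc.exists_bound_of_continuousOn hcont
    exact ⟨C, fun t ht => (le_abs_self _).trans (hC t ht)⟩
  have hjet : ∀ t ∈ Icc 0 T, lieJet f p N (φ t) = 0 := by
    refine eq_zero_of_abs_deriv_le_mul_abs_self_of_eq_zero_right (K := max 1 C)
      (f' := fun t => lieJet f (lieD f p) N (φ t))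
      (fun t ht => (hsol.hasDerivWithinAt_lieJet p N ht).continuousWithinAt)
      (fun t ht => (hsol.hasDerivWithinAt_lieJet p N (Ico_subset_Icc_self ht)
        |>.mono_of_mem_nhdsWithin (Icc_mem_nhdsGE_of_mem ht)))
      (funext fun i => h0 i i.2) fun t ht => ?_
    have ht' := Ico_subset_Icc_self ht
    exact (norm_lieJet_lieD_le f p g (hrank _ (hQ t ht'))).trans <|
      mul_le_mul_of_nonneg_right (max_le_max_left 1 (hC t ht')) (norm_nonneg _)
  intro t ht
  simpa [lieJet] using congrFun (hjet t ht) ⟨0, hN⟩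

/-- Soundness of the differential radical invariant rule (dRI). -/
theorem dRI_sound {n : ℕ} (hn : 1 ≤ n) (f : Fin n → MvPolynomial (Fin n) ℝ)
    (Q : Set (Fin n → ℝ)) (p : MvPolynomial (Fin n) ℝ)
    (N : ℕ) (hN : 1 ≤ N) (g : ℕ → MvPolynomial (Fin n) ℝ)
    (hrank : ∀ x ∈ Q,
      eval x ((lieD f)^[N] p) = ∑ i ∈ Finset.range N, eval x (g i) * eval x ((lieD f)^[i] p))
    (T : ℝ) (hT : 0 ≤ T) (φ : ℝ → (Fin n → ℝ))
    (hsol : IsSol f T φ) (hQ : ∀ t ∈ Icc (0 : ℝ) T, φ t ∈ Q)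
    (h0 : ∀ i < N, eval (φ 0) ((lieD f)^[i] p) = 0) :
    ∀ t ∈ Icc (0 : ℝ) T, eval (φ t) p = 0 :=
  dRI_sound_general f Q p N hN g hrank T φ hsol hQ h0
end

section
/- Liouville's formula for derivations: Let R be a commutative ring, let d : R → R be an additive map satisfying the Leibniz rule d(ab) = d(a)·b + a·d(b) for all a, b ∈ R, and let A and B be m×m matrices over R such that applying d entrywise to A yields the matrix product B·A (i.e., d(A_{ij}) = Σ_k B_{ik}·A_{kj} for all i, j). Then d(det A) = trace(B)·det A. -/
/-!
Over the dual numbers `R[ε]` a derivation `D` is the same thing as the ring homomorphism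
`x ↦ x + D x ε`. Applied to `A` it gives `A + ε (B * A) = (1 + ε B) A`, and since `ε² = 0`,
`det (1 + ε B) = 1 + trace B ε`. Hence `det A + D (det A) ε = (1 + trace B ε) det A`; compare
the `ε`-parts.
-/

open DualNumber TrivSqZeroExt

namespace DualNumber

theorem det_one_add_eps_smul {R n : Type*} [CommRing R] [Fintype n] [DecidableEq n]
    (M : Matrix n n R[ε]) : (1 + (ε : R[ε]) • M).det = 1 + M.trace * ε := by
  rw [Matrix.det_one_add_smul, eps_pow_two, mul_zero, add_zero]

end DualNumber

namespace Derivation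

variable {S R : Type*} [CommSemiring S] [CommRing R] [Algebra S R]

@[simps]
def toDualNumberHom (D : Derivation S R R) : R →+* R[ε] where
  toFun x := inl x + inr (D x)
  map_one' := by simp
  map_mul' x y := by
    ext
    · simp
    · simp only [DualNumber.snd_mul, fst_add, snd_add, fst_inl, snd_inl, fst_inr, snd_inr,
        D.leibniz, smul_eq_mul]
      ring
  map_zero' := by simp
  map_add' x y := by ext <;> simp

theorem map_det_of_map_eq_mul {n : Type*} [Fintype n] [DecidableEq n] (D : Derivation S R R)
    {A B : Matrix n n R} (h : A.map D = B * A) : D A.det = B.trace * A.det := by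
  have hA : D.toDualNumberHom.mapMatrix A =
      (1 + (ε : R[ε]) • (inlHom R R).mapMatrix B) * (inlHom R R).mapMatrix A := by
    rw [add_mul, one_mul, Matrix.smul_mul, ← map_mul, ← h]
    ext i j <;> simp
  have hdet := congrArg snd (D.toDualNumberHom.map_det A)
  rw [hA, Matrix.det_mul, det_one_add_eps_smul, ← RingHom.map_det] at hdet
  simpa [← AddMonoidHom.map_trace] using hdet

end Derivation

/-- Liouville's formula for derivations: if the entrywise derivative of `A`
is `B * A`, then `d (det A) = trace B * det A`. -/
theorem liouville_derivation {R : Type*} [CommRing R] (d : R → R)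
    (hadd : ∀ a b : R, d (a + b) = d a + d b)
    (hleibniz : ∀ a b : R, d (a * b) = d a * b + a * d b)
    (m : ℕ) (A B : Matrix (Fin m) (Fin m) R)
    (hAB : ∀ i j, d (A i j) = ∑ k, B i k * A k j) :
    d A.det = B.trace * A.det := by
  let D : Derivation ℤ R R := Derivation.mk' (AddMonoidHom.mk' d hadd).toIntLinearMap
    fun a b => by
      simp only [AddMonoidHom.coe_toIntLinearMap, AddMonoidHom.mk'_apply, hleibniz, smul_eq_mul]
      ring
  exact D.map_det_of_map_eq_mul (Matrix.ext hAB)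
end

section
/- Real induction principle: Let a ≤ b be real numbers and let S be a subset of the closed interval [a,b]. Then S is inductive if and only if S = [a,b]. -/
/-!
If `S` missed a point of `[a,b]`, let `c` be the infimum of the missed points. Then `[a,c) ⊆ S`,
so `c ∈ S` and `S` contains some `[c,y]` with `y > c`; hence every missed point exceeds `y`,
contradicting `c < y`.
-/

open Set

theorem Icc_subset_of_forall_Ico_subset {α : Type*} [ConditionallyCompleteLinearOrder α]
    {a b : α} {S : Set α}
    (h : ∀ x ∈ Icc a b, Ico a x ⊆ S → x ∈ S ∧ (x < b → ∃ y > x, Icc x y ⊆ S)) :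
    Icc a b ⊆ S := by
  by_contra hsub
  set T := Icc a b \ S
  have hT : T.Nonempty := sdiff_nonempty.mpr hsub
  have hc_le : ∀ t ∈ T, sInf T ≤ t := fun t ht => csInf_le ⟨a, fun s hs => hs.1.1⟩ ht
  have hc_mem : sInf T ∈ Icc a b :=
    ⟨le_csInf hT fun t ht => ht.1.1, (hc_le _ hT.some_mem).trans hT.some_mem.1.2⟩
  have hIco : Ico a (sInf T) ⊆ S := fun x hx => by_contra fun hxS =>
    (hc_le x ⟨⟨hx.1, hx.2.le.trans hc_mem.2⟩, hxS⟩).not_gt hx.2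
  obtain ⟨hcS, hstep⟩ := h _ hc_mem hIco
  rcases hc_mem.2.eq_or_lt with hcb | hcb
  · obtain ⟨t, ht⟩ := hT
    exact ht.2 (le_antisymm (ht.1.2.trans hcb.ge) (hc_le t ht) ▸ hcS)
  · obtain ⟨y, hcy, hy⟩ := hstep hcb
    have hyc : y ≤ sInf T :=
      le_csInf hT fun t ht => le_of_not_ge fun hty => ht.2 (hy ⟨hc_le t ht, hty⟩)
    exact hyc.not_gt hcy

theorem real_induction_general (a b : ℝ) (S : Set ℝ) (hS : S ⊆ Icc a b) :
    (∀ x ∈ Icc a b, Ico a x ⊆ S →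
        x ∈ S ∧ (x < b → ∃ ε > 0, Icc x (x + ε) ⊆ S))
    ↔ S = Icc a b := by
  constructor
  · intro h
    refine hS.antisymm (Icc_subset_of_forall_Ico_subset fun x hx hIco => ?_)
    obtain ⟨hxS, hstep⟩ := h x hx hIco
    refine ⟨hxS, fun hxb => ?_⟩
    obtain ⟨ε, hε, hsub⟩ := hstep hxb
    exact ⟨x + ε, lt_add_of_pos_right x hε, hsub⟩
  · rintro rfl x hx -
    refine ⟨hx, fun hxb => ⟨b - x, sub_pos.mpr hxb, ?_⟩⟩
    rw [add_sub_cancel]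
    exact Icc_subset_Icc_left hx.1

/-- Real induction principle: a subset `S ⊆ [a,b]` is inductive
iff `S = [a,b]`. -/
theorem real_induction (a b : ℝ) (hab : a ≤ b) (S : Set ℝ) (hS : S ⊆ Icc a b) :
    (∀ x ∈ Icc a b, Ico a x ⊆ S →
        x ∈ S ∧ (x < b → ∃ ε > 0, Icc x (x + ε) ⊆ S))
    ↔ S = Icc a b :=
  real_induction_general a b S hS
end

section
/- Soundness of the uniqueness axiom (Uniq): Let f be a polynomial vector field on ℝⁿ, let Q₁, Q₂, P₁, P₂ ⊆ ℝⁿ, and let φ₁ : [0,T₁] → ℝⁿ and φ₂ : [0,T₂] → ℝⁿ be solutions of x' = f(x) with φ₁(0) = φ₂(0), such that φ₁(t) ∈ Q₁ for all t ∈ [0,T₁], φ₂(t) ∈ Q₂ for all t ∈ [0,T₂], φ₁(T₁) ∈ P₁, and φ₂(T₂) ∈ P₂. Then there exist T ≥ 0 and a solution φ : [0,T] → ℝⁿ of x' = f(x) with φ(0) = φ₁(0), φ(t) ∈ Q₁ ∩ Q₂ for all t ∈ [0,T], and φ(T) ∈ P₁ ∪ P₂. -/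
open MvPolynomial Set

/-! A solution that lives on the shorter interval agrees there with the other one, by uniqueness
of solutions of ODEs with a locally Lipschitz right-hand side (polynomial vector fields are `C¹`).
So the shorter solution stays in `Q₁ ∩ Q₂` and ends in the corresponding `Pᵢ`. -/

section Uniqueness

variable {E : Type*} [NormedAddCommGroup E] [NormedSpace ℝ E]

lemma LocallyLipschitz.eqOn_Icc_of_hasDerivWithinAt {v : E → E} (hv : LocallyLipschitz v)
    {a b : ℝ} {γ₁ γ₂ : ℝ → E}
    (h₁ : ∀ t ∈ Icc a b, HasDerivWithinAt γ₁ (v (γ₁ t)) (Icc a b) t)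
    (h₂ : ∀ t ∈ Icc a b, HasDerivWithinAt γ₂ (v (γ₂ t)) (Icc a b) t)
    (ha : γ₁ a = γ₂ a) : EqOn γ₁ γ₂ (Icc a b) := by
  have hc₁ : ContinuousOn γ₁ (Icc a b) := fun t ht => (h₁ t ht).continuousWithinAt
  have hc₂ : ContinuousOn γ₂ (Icc a b) := fun t ht => (h₂ t ht).continuousWithinAt
  set K := γ₁ '' Icc a b ∪ γ₂ '' Icc a b
  have hK : IsCompact K :=
    (isCompact_Icc.image_of_continuousOn hc₁).union (isCompact_Icc.image_of_continuousOn hc₂)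
  obtain ⟨L, hL⟩ := (hv.locallyLipschitzOn (s := K)).exists_lipschitzOnWith_of_compact hK
  exact ODE_solution_unique_of_mem_Icc_right (v := fun _ => v) (s := fun _ => K)
    (fun _ _ => hL) hc₁
    (fun t ht => (h₁ t (Ico_subset_Icc_self ht)).mono_of_mem_nhdsWithin (Icc_mem_nhdsGE_of_mem ht))
    (fun t ht => Or.inl ⟨t, Ico_subset_Icc_self ht, rfl⟩) hc₂
    (fun t ht => (h₂ t (Ico_subset_Icc_self ht)).mono_of_mem_nhdsWithin (Icc_mem_nhdsGE_of_mem ht))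
    (fun t ht => Or.inr ⟨t, Ico_subset_Icc_self ht, rfl⟩) ha

end Uniqueness

lemma MvPolynomial.locallyLipschitz_eval_pi {σ ι : Type*} [Fintype σ] [Fintype ι]
    (f : ι → MvPolynomial σ ℝ) : LocallyLipschitz fun x i => eval x (f i) :=
  ContDiff.locallyLipschitz <|
    contDiff_pi.2 fun i => (AnalyticOnNhd.eval_mvPolynomial (f i)).contDiff

lemma IsSol.eqOn_of_le {n : ℕ} {f : Fin n → MvPolynomial (Fin n) ℝ} {T₁ T₂ : ℝ}
    {φ₁ φ₂ : ℝ → (Fin n → ℝ)} (h₁ : IsSol f T₁ φ₁) (h₂ : IsSol f T₂ φ₂) (hle : T₁ ≤ T₂)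
    (h0 : φ₁ 0 = φ₂ 0) : EqOn φ₁ φ₂ (Icc 0 T₁) :=
  (locallyLipschitz_eval_pi f).eqOn_Icc_of_hasDerivWithinAt h₁
    (fun t ht => (h₂ t ⟨ht.1, ht.2.trans hle⟩).mono (Icc_subset_Icc_right hle)) h0

lemma IsSol.mapsTo_of_le {n : ℕ} {f : Fin n → MvPolynomial (Fin n) ℝ} {T₁ T₂ : ℝ}
    {φ₁ φ₂ : ℝ → (Fin n → ℝ)} (h₁ : IsSol f T₁ φ₁) (h₂ : IsSol f T₂ φ₂) (hle : T₁ ≤ T₂)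
    (h0 : φ₁ 0 = φ₂ 0) {Q : Set (Fin n → ℝ)} (hQ : ∀ t ∈ Icc (0 : ℝ) T₂, φ₂ t ∈ Q) :
    ∀ t ∈ Icc (0 : ℝ) T₁, φ₁ t ∈ Q := fun t ht => by
  rw [h₁.eqOn_of_le h₂ hle h0 ht]
  exact hQ t ⟨ht.1, ht.2.trans hle⟩

theorem uniq_sound_general {n : ℕ} (f : Fin n → MvPolynomial (Fin n) ℝ)
    (Q₁ Q₂ P₁ P₂ : Set (Fin n → ℝ))
    (T₁ T₂ : ℝ) (hT₁ : 0 ≤ T₁) (hT₂ : 0 ≤ T₂)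
    (φ₁ φ₂ : ℝ → (Fin n → ℝ)) (h₁ : IsSol f T₁ φ₁) (h₂ : IsSol f T₂ φ₂)
    (h0 : φ₁ 0 = φ₂ 0)
    (hQ₁ : ∀ t ∈ Icc (0 : ℝ) T₁, φ₁ t ∈ Q₁) (hQ₂ : ∀ t ∈ Icc (0 : ℝ) T₂, φ₂ t ∈ Q₂)
    (hP₁ : φ₁ T₁ ∈ P₁) (hP₂ : φ₂ T₂ ∈ P₂) :
    ∃ T : ℝ, 0 ≤ T ∧ ∃ φ : ℝ → (Fin n → ℝ), IsSol f T φ ∧ φ 0 = φ₁ 0 ∧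
      (∀ t ∈ Icc (0 : ℝ) T, φ t ∈ Q₁ ∩ Q₂) ∧ φ T ∈ P₁ ∪ P₂ := by
  rcases le_total T₁ T₂ with hle | hle
  · exact ⟨T₁, hT₁, φ₁, h₁, rfl,
      fun t ht => ⟨hQ₁ t ht, h₁.mapsTo_of_le h₂ hle h0 hQ₂ t ht⟩, Or.inl hP₁⟩
  · exact ⟨T₂, hT₂, φ₂, h₂, h0.symm,
      fun t ht => ⟨h₂.mapsTo_of_le h₁ hle h0.symm hQ₁ t ht, hQ₂ t ht⟩, Or.inr hP₂⟩

/-- Soundness of the uniqueness axiom (Uniq). -/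
theorem uniq_sound {n : ℕ} (hn : 1 ≤ n) (f : Fin n → MvPolynomial (Fin n) ℝ)
    (Q₁ Q₂ P₁ P₂ : Set (Fin n → ℝ))
    (T₁ T₂ : ℝ) (hT₁ : 0 ≤ T₁) (hT₂ : 0 ≤ T₂)
    (φ₁ φ₂ : ℝ → (Fin n → ℝ)) (h₁ : IsSol f T₁ φ₁) (h₂ : IsSol f T₂ φ₂)
    (h0 : φ₁ 0 = φ₂ 0)
    (hQ₁ : ∀ t ∈ Icc (0 : ℝ) T₁, φ₁ t ∈ Q₁) (hQ₂ : ∀ t ∈ Icc (0 : ℝ) T₂, φ₂ t ∈ Q₂)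
    (hP₁ : φ₁ T₁ ∈ P₁) (hP₂ : φ₂ T₂ ∈ P₂) :
    ∃ T : ℝ, 0 ≤ T ∧ ∃ φ : ℝ → (Fin n → ℝ), IsSol f T φ ∧ φ 0 = φ₁ 0 ∧
      (∀ t ∈ Icc (0 : ℝ) T, φ t ∈ Q₁ ∩ Q₂) ∧ φ T ∈ P₁ ∪ P₂ :=
  uniq_sound_general f Q₁ Q₂ P₁ P₂ T₁ T₂ hT₁ hT₂ φ₁ φ₂ h₁ h₂ h0 hQ₁ hQ₂ hP₁ hP₂
end

section
/- Soundness of the continuous existence axiom (Cont): Let f be a polynomial vector field on ℝⁿ with induced map F, let p be a polynomial, and let ω ∈ ℝⁿ satisfy p(ω) > 0 and F(ω) ≠ 0. Then there exist T > 0 and a solution φ : [0,T] → ℝⁿ of x' = f(x) with φ(0) = ω, φ(T) ≠ ω, and p(φ(t)) > 0 for all t ∈ [0,T]. -/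
open MvPolynomial Set

/-!
The solution of `x' = f(x)` through `ω` given by Picard–Lindelöf stays, for small times, in any
neighbourhood of `ω`: both in `{p > 0}` and where the velocity `F(x)` is within `‖F(ω)‖ / 2` of
`F(ω) ≠ 0`. On such a short interval `φ(t) - t • F(ω)` moves by at most `t ‖F(ω)‖ / 2`, so `φ`
cannot return to `ω`.
-/

open Filter Topology Metric

theorem contDiff_eval_mvPolynomial {𝕜 σ : Type*} [NontriviallyNormedField 𝕜] [CompleteSpace 𝕜]
    [Fintype σ] {k : WithTop ℕ∞} (p : MvPolynomial σ 𝕜) : ContDiff 𝕜 k (eval · p) :=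
  (AnalyticOnNhd.eval_mvPolynomial p).contDiff

section IntegralCurve

variable {E : Type*} [NormedAddCommGroup E] [NormedSpace ℝ E]

theorem ContDiffAt.exists_hasDerivWithinAt_Icc_forall_mem [CompleteSpace E] {v : E → E} {x₀ : E}
    (hv : ContDiffAt ℝ 1 v x₀) {U : Set E} (hU : U ∈ 𝓝 x₀) :
    ∃ T > 0, ∃ φ : ℝ → E, φ 0 = x₀ ∧
      ∀ t ∈ Icc 0 T, HasDerivWithinAt φ (v (φ t)) (Icc 0 T) t ∧ φ t ∈ U := by
  obtain ⟨φ, hφ0, ε, hε, hφ⟩ :=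
    hv.exists_forall_mem_closedBall_exists_eq_forall_mem_Ioo_hasDerivAt₀ 0
  simp only [zero_sub, zero_add] at hφ
  have hφU : φ ⁻¹' U ∈ 𝓝 0 :=
    (hφ 0 ⟨neg_lt_zero.mpr hε, hε⟩).continuousAt.preimage_mem_nhds (hφ0 ▸ hU)
  obtain ⟨δ, hδ, hδU⟩ := Metric.mem_nhds_iff.mp hφU
  have hIcc : ∀ t ∈ Icc 0 (min ε δ / 2), t ∈ Ioo (-ε) ε ∧ t ∈ ball 0 δ := fun t ⟨h0, hT⟩ => by
    have := min_le_left ε δ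
    have := min_le_right ε δ
    exact ⟨⟨by linarith, by linarith⟩, by rw [Real.ball_eq_Ioo]; constructor <;> linarith⟩
  refine ⟨min ε δ / 2, by positivity, φ, hφ0, fun t ht => ⟨?_, hδU (hIcc t ht).2⟩⟩
  exact (hφ t (hIcc t ht).1).hasDerivWithinAt

theorem apply_ne_apply_zero_of_norm_deriv_sub_le {φ φ' : ℝ → E} {v : E} {T C : ℝ}
    (hT : 0 < T) (hC : C < ‖v‖) (hφ : ∀ t ∈ Icc 0 T, HasDerivWithinAt φ (φ' t) (Icc 0 T) t)
    (hφ' : ∀ t ∈ Ico 0 T, ‖φ' t - v‖ ≤ C) : φ T ≠ φ 0 := by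
  intro hret
  have hdrift : ∀ t ∈ Icc 0 T,
      HasDerivWithinAt (fun s => φ s - s • v) (φ' t - v) (Icc 0 T) t := fun t ht => by
    simpa only [id, one_smul] using (hφ t ht).fun_sub ((hasDerivWithinAt_id t _).smul_const v)
  have hle := norm_image_sub_le_of_norm_deriv_le_segment' hdrift hφ' T ⟨hT.le, le_rfl⟩
  rw [hret, zero_smul, sub_zero, sub_sub_cancel_left, norm_neg, norm_smul,
    Real.norm_of_nonneg hT.le, sub_zero, mul_comm] at hle
  exact (mul_lt_mul_of_pos_left hC hT).not_ge (by linarith)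

end IntegralCurve

theorem cont_sound_general {n : ℕ} (f : Fin n → MvPolynomial (Fin n) ℝ)
    (p : MvPolynomial (Fin n) ℝ) (ω : Fin n → ℝ)
    (hp : 0 < eval ω p) (hF : (fun i => eval ω (f i)) ≠ (0 : Fin n → ℝ)) :
    ∃ T : ℝ, 0 < T ∧ ∃ φ : ℝ → (Fin n → ℝ), IsSol f T φ ∧ φ 0 = ω ∧ φ T ≠ ω ∧
      ∀ t ∈ Icc (0 : ℝ) T, 0 < eval (φ t) p := by
  set v : (Fin n → ℝ) → (Fin n → ℝ) := fun x i => eval x (f i)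
  have hv : ContDiff ℝ 1 v := contDiff_pi.mpr fun i => contDiff_eval_mvPolynomial (f i)
  have hvω : 0 < ‖v ω‖ := norm_pos_iff.mpr hF
  have hU : (eval · p) ⁻¹' Ioi 0 ∩ v ⁻¹' closedBall (v ω) (‖v ω‖ / 2) ∈ 𝓝 ω :=
    inter_mem ((continuous_eval p).continuousAt.preimage_mem_nhds (Ioi_mem_nhds hp))
      (hv.continuous.continuousAt.preimage_mem_nhds (closedBall_mem_nhds _ (by positivity)))
  obtain ⟨T, hT, φ, hφ0, hφ⟩ := hv.contDiffAt.exists_hasDerivWithinAt_Icc_forall_mem hU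
  refine ⟨T, hT, φ, fun t ht => (hφ t ht).1, hφ0, ?_, fun t ht => (hφ t ht).2.1⟩
  refine hφ0 ▸ apply_ne_apply_zero_of_norm_deriv_sub_le hT (half_lt_self hvω)
    (fun t ht => (hφ t ht).1) fun t ht => ?_
  simpa [← dist_eq_norm] using (hφ t (Ico_subset_Icc_self ht)).2.2

/-- Soundness of the continuous existence axiom (Cont). -/
theorem cont_sound {n : ℕ} (hn : 1 ≤ n) (f : Fin n → MvPolynomial (Fin n) ℝ)
    (p : MvPolynomial (Fin n) ℝ) (ω : Fin n → ℝ)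
    (hp : 0 < eval ω p) (hF : (fun i => eval ω (f i)) ≠ (0 : Fin n → ℝ)) :
    ∃ T : ℝ, 0 < T ∧ ∃ φ : ℝ → (Fin n → ℝ), IsSol f T φ ∧ φ 0 = ω ∧ φ T ≠ ω ∧
      ∀ t ∈ Icc (0 : ℝ) T, 0 < eval (φ t) p :=
  cont_sound_general f p ω hp hF
end

section
/- Local progress for non-strict polynomial inequalities (LP≥*): Let f be a polynomial vector field on ℝⁿ and let p be a polynomial with rank N with respect to f. If ω ∈ ℝⁿ satisfies the weak progress predicate Prog≥_f(p)(ω), then there exist T > 0 and a solution φ : [0,T] → ℝⁿ of x' = f(x) with φ(0) = ω and p(φ(t)) ≥ 0 for all t ∈ [0,T]. -/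
/-!
Along a local solution `φ` with `φ 0 = ω`, the functions `h j t := p_j(φ t)`, where `p_j` is the
`j`-th Lie derivative of `p`, satisfy `h j' = h (j + 1)`. Under strict progress `h k > 0` near `0`
while `h 0, …, h (k - 1)` vanish at `0`, so integrating `k` times gives `h 0 ≥ 0`. Otherwise
`h 0, …, h (N - 1)` vanish at `0`, and the rank relation makes `(h 0, …, h (N - 1))` a solution of
a linear ODE with continuous coefficients, which vanishes identically by Grönwall's inequality.
-/

open MvPolynomial Set

/-- `N` is a rank of `p` with respect to `f`. -/
def IsRank {n : ℕ} (f : Fin n → MvPolynomial (Fin n) ℝ)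
    (p : MvPolynomial (Fin n) ℝ) (N : ℕ) : Prop :=
  1 ≤ N ∧ ∃ g : ℕ → MvPolynomial (Fin n) ℝ,
    (lieD f)^[N] p = ∑ i ∈ Finset.range N, g i * (lieD f)^[i] p

/-- Strict progress predicate: the first significant Lie derivative is positive. -/
def ProgGt {n : ℕ} (f : Fin n → MvPolynomial (Fin n) ℝ)
    (p : MvPolynomial (Fin n) ℝ) (N : ℕ) (ω : Fin n → ℝ) : Prop :=
  ∃ k < N, (∀ j < k, eval ω ((lieD f)^[j] p) = 0) ∧ 0 < eval ω ((lieD f)^[k] p)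

/-- Weak progress predicate. -/
def ProgGe {n : ℕ} (f : Fin n → MvPolynomial (Fin n) ℝ)
    (p : MvPolynomial (Fin n) ℝ) (N : ℕ) (ω : Fin n → ℝ) : Prop :=
  ProgGt f p N ω ∨ ∀ i < N, eval ω ((lieD f)^[i] p) = 0

open Filter Topology

lemma MvPolynomial.hasDerivAt_eval_comp {σ : Type*} [Fintype σ] {φ : ℝ → σ → ℝ} {v : σ → ℝ}
    {t : ℝ} (hφ : HasDerivAt φ v t) (q : MvPolynomial σ ℝ) :
    HasDerivAt (fun s => eval (φ s) q) (∑ i, eval (φ t) (pderiv i q) * v i) t := by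
  classical
  induction q using MvPolynomial.induction_on with
  | C a => simpa using hasDerivAt_const t a
  | add p q hp hq => simpa [add_mul, Finset.sum_add_distrib] using hp.fun_add hq
  | mul_X p i hp =>
    simp only [eval_mul, eval_X]
    refine (hp.fun_mul (hasDerivAt_pi.mp hφ i)).congr_deriv ?_
    simp only [Derivation.leibniz, pderiv_X, smul_eq_mul, map_mul, eval_X, map_add,
      Pi.single_apply, add_mul, Finset.sum_add_distrib, Finset.sum_mul]
    simp [apply_ite, add_comm, mul_comm, mul_left_comm]

lemma MvPolynomial.contDiff_eval {σ : Type*} [Fintype σ] {k : WithTop ℕ∞} (q : MvPolynomial σ ℝ) :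
    ContDiff ℝ k fun x : σ → ℝ => eval x q :=
  (AnalyticOnNhd.eval_mvPolynomial q).contDiff

lemma exists_eventually_hasDerivAt_eval {σ : Type*} [Fintype σ] (f : σ → MvPolynomial σ ℝ)
    (ω : σ → ℝ) :
    ∃ φ : ℝ → σ → ℝ, φ 0 = ω ∧ ∀ᶠ t in 𝓝 0, HasDerivAt φ (fun i => eval (φ t) (f i)) t := by
  have hF : ContDiff ℝ 1 fun x : σ → ℝ => fun i => eval x (f i) :=
    contDiff_pi.2 fun i => contDiff_eval (f i)
  obtain ⟨φ, hφ0, ε, hε, hφ⟩ :=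
    hF.contDiffAt.exists_forall_mem_closedBall_exists_eq_forall_mem_Ioo_hasDerivAt₀ (x₀ := ω) 0
  exact ⟨φ, hφ0, eventually_of_mem (Ioo_mem_nhds (by linarith) (by linarith)) hφ⟩

lemma hasDerivAt_eval_lieD {n : ℕ} {f : Fin n → MvPolynomial (Fin n) ℝ} {φ : ℝ → Fin n → ℝ}
    {t : ℝ} (hφ : HasDerivAt φ (fun i => eval (φ t) (f i)) t) (q : MvPolynomial (Fin n) ℝ) :
    HasDerivAt (fun s => eval (φ s) q) (eval (φ t) (lieD f q)) t := by
  simpa [lieD] using hasDerivAt_eval_comp hφ q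

lemma nonneg_of_hasDerivAt_of_deriv_nonneg {u u' : ℝ → ℝ} {a b : ℝ}
    (hu : ∀ t ∈ Icc a b, HasDerivAt u (u' t) t) (ha : 0 ≤ u a)
    (hu' : ∀ t ∈ Icc a b, 0 ≤ u' t) : ∀ t ∈ Icc a b, 0 ≤ u t := by
  have hmono : MonotoneOn u (Icc a b) :=
    monotoneOn_of_hasDerivWithinAt_nonneg (convex_Icc a b)
      (fun t ht => (hu t ht).continuousAt.continuousWithinAt)
      (fun t ht => (hu t (interior_subset ht)).hasDerivWithinAt)
      (fun t ht => hu' t (interior_subset ht))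
  exact fun t ht => ha.trans (hmono (left_mem_Icc.2 (ht.1.trans ht.2)) ht ht.1)

lemma nonneg_of_hasDerivAt_succ {h : ℕ → ℝ → ℝ} {a b : ℝ} (k : ℕ)
    (hD : ∀ t ∈ Icc a b, ∀ j, HasDerivAt (h j) (h (j + 1) t) t) (ha : ∀ j < k, 0 ≤ h j a)
    (hk : ∀ t ∈ Icc a b, 0 ≤ h k t) : ∀ t ∈ Icc a b, 0 ≤ h 0 t := by
  induction k generalizing h with
  | zero => exact hk
  | succ k ih =>
    have h1 : ∀ t ∈ Icc a b, 0 ≤ h 1 t :=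
      ih (h := fun j => h (j + 1)) (fun t ht j => hD t ht (j + 1))
        (fun j hj => ha (j + 1) (by omega)) hk
    exact nonneg_of_hasDerivAt_of_deriv_nonneg (fun t ht => hD t ht 0) (ha 0 k.succ_pos) h1

lemma eqOn_zero_of_norm_deriv_le {E : Type*} [NormedAddCommGroup E] [NormedSpace ℝ E]
    {H H' : ℝ → E} {K a b : ℝ} (hH : ∀ t ∈ Icc a b, HasDerivAt H (H' t) t) (ha : H a = 0)
    (hbound : ∀ t ∈ Icc a b, ‖H' t‖ ≤ K * ‖H t‖) : EqOn H 0 (Icc a b) := by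
  intro t ht
  have := norm_le_gronwallBound_of_norm_deriv_right_le (δ := 0) (ε := 0)
    (fun t ht => (hH t ht).continuousAt.continuousWithinAt)
    (fun t ht => (hH t (Ico_subset_Icc_self ht)).hasDerivWithinAt) (by simp [ha])
    (fun t ht => by simpa using hbound t (Ico_subset_Icc_self ht)) t ht
  simpa [gronwallBound_ε0_δ0] using this

lemma eq_zero_of_hasDerivAt_succ_of_linear_recurrence {h c : ℕ → ℝ → ℝ} {a b : ℝ} {N : ℕ}
    (hD : ∀ t ∈ Icc a b, ∀ j, HasDerivAt (h j) (h (j + 1) t) t)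
    (hrec : ∀ t ∈ Icc a b, h N t = ∑ j ∈ Finset.range N, c j t * h j t)
    (hc : ∀ j < N, ContinuousOn (c j) (Icc a b)) (ha : ∀ j < N, h j a = 0) :
    ∀ j < N, ∀ t ∈ Icc a b, h j t = 0 := by
  obtain ⟨C, hC⟩ : ∃ C, ∀ t ∈ Icc a b, ‖fun j : Fin N => c j t‖ ≤ C :=
    isCompact_Icc.exists_bound_of_continuousOn (continuousOn_pi.2 fun j => hc j j.2)
  set H : ℝ → Fin N → ℝ := fun t j => h j t
  have hbound : ∀ t ∈ Icc a b, ‖fun j : Fin N => h (j + 1) t‖ ≤ max 1 (N * C) * ‖H t‖ := by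
    intro t ht
    refine (pi_norm_le_iff_of_nonneg (by positivity)).2 fun i => ?_
    by_cases hi : (i : ℕ) + 1 < N
    · calc ‖h (i + 1) t‖ = ‖H t ⟨i + 1, hi⟩‖ := rfl
        _ ≤ ‖H t‖ := norm_le_pi_norm (H t) _
        _ ≤ max 1 (N * C) * ‖H t‖ := le_mul_of_one_le_left (norm_nonneg _) (le_max_left _ _)
    · have hc_le : ∀ j < N, ‖c j t‖ ≤ C := fun j hj =>
        (norm_le_pi_norm (fun j : Fin N => c j t) ⟨j, hj⟩).trans (hC t ht)
      have hh_le : ∀ j < N, ‖h j t‖ ≤ ‖H t‖ := fun j hj => norm_le_pi_norm (H t) ⟨j, hj⟩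
      calc ‖h (i + 1) t‖ = ‖∑ j ∈ Finset.range N, c j t * h j t‖ := by
            rw [show (i : ℕ) + 1 = N by omega, hrec t ht]
        _ ≤ ∑ j ∈ Finset.range N, C * ‖H t‖ := by
            refine (norm_sum_le _ _).trans (Finset.sum_le_sum fun j hj => ?_)
            rw [norm_mul]
            have hj := Finset.mem_range.1 hj
            exact mul_le_mul (hc_le j hj) (hh_le j hj) (norm_nonneg _)
              ((norm_nonneg _).trans (hc_le j hj))
        _ = N * C * ‖H t‖ := by simp [mul_assoc]
        _ ≤ max 1 (N * C) * ‖H t‖ := by gcongr; exact le_max_right _ _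
  have hzero : EqOn H 0 (Icc a b) :=
    eqOn_zero_of_norm_deriv_le (fun t ht => hasDerivAt_pi.2 fun j => hD t ht j)
      (funext fun j => ha j j.2) hbound
  exact fun j hj t ht => congrFun (hzero ht) ⟨j, hj⟩

theorem LP_geq_general {n : ℕ} (f : Fin n → MvPolynomial (Fin n) ℝ)
    (p : MvPolynomial (Fin n) ℝ) (N : ℕ) (hN : IsRank f p N)
    (ω : Fin n → ℝ) (hprog : ProgGe f p N ω) :
    ∃ T : ℝ, 0 < T ∧ ∃ φ : ℝ → (Fin n → ℝ), IsSol f T φ ∧ φ 0 = ω ∧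
      ∀ t ∈ Icc (0 : ℝ) T, 0 ≤ eval (φ t) p := by
  obtain ⟨hN_pos, g, hg⟩ := hN
  obtain ⟨φ, hφ0, hφ⟩ := exists_eventually_hasDerivAt_eval f ω
  set h : ℕ → ℝ → ℝ := fun j t => eval (φ t) ((lieD f)^[j] p) with h_def
  have hD : ∀ᶠ t in 𝓝 0, HasDerivAt φ (fun i => eval (φ t) (f i)) t ∧
      ∀ j, HasDerivAt (h j) (h (j + 1) t) t :=
    hφ.mono fun t ht => ⟨ht, fun j => by
      simpa only [h_def, Function.iterate_succ_apply'] using hasDerivAt_eval_lieD ht _⟩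
  rcases hprog with ⟨k, -, hz, hpos⟩ | hall
  · have hk : ∀ᶠ t in 𝓝 0, 0 < h k t :=
      (hD.self_of_nhds.2 k).continuousAt.eventually
        (lt_mem_nhds (by simpa [h_def, hφ0] using hpos))
    obtain ⟨T, hT, hsub⟩ := mem_nhdsGE_iff_exists_Icc_subset.1 (nhdsWithin_le_nhds (hD.and hk))
    refine ⟨T, hT, φ, fun t ht => (hsub ht).1.1.hasDerivWithinAt, hφ0, ?_⟩
    exact nonneg_of_hasDerivAt_succ k (fun t ht => (hsub ht).1.2)
      (fun j hj => by simp [h_def, hφ0, hz j hj]) (fun t ht => (hsub ht).2.le)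
  · obtain ⟨T, hT, hsub⟩ := mem_nhdsGE_iff_exists_Icc_subset.1 (nhdsWithin_le_nhds hD)
    refine ⟨T, hT, φ, fun t ht => (hsub ht).1.hasDerivWithinAt, hφ0, fun t ht => ?_⟩
    refine (eq_zero_of_hasDerivAt_succ_of_linear_recurrence (c := fun j t => eval (φ t) (g j))
      (fun t ht => (hsub ht).2) (fun t _ => by simp [h_def, hg]) (fun j _ => ?_)
      (fun j hj => by simp [h_def, hφ0, hall j hj]) 0 hN_pos t ht).ge
    exact (continuous_eval (g j)).comp_continuousOn
      fun t ht => (hsub ht).1.continuousAt.continuousWithinAt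

/-- Local progress for non-strict polynomial inequalities (LP≥*). -/
theorem LP_geq {n : ℕ} (hn : 1 ≤ n) (f : Fin n → MvPolynomial (Fin n) ℝ)
    (p : MvPolynomial (Fin n) ℝ) (N : ℕ) (hN : IsRank f p N)
    (ω : Fin n → ℝ) (hprog : ProgGe f p N ω) :
    ∃ T : ℝ, 0 < T ∧ ∃ φ : ℝ → (Fin n → ℝ), IsSol f T φ ∧ φ 0 = ω ∧
      ∀ t ∈ Icc (0 : ℝ) T, 0 ≤ eval (φ t) p :=
  LP_geq_general f p N hN ω hprog
end

section
/- Semantic soundness of vectorial differential ghosts (DG): Let f be a polynomial vector field on ℝⁿ, let m ≥ 1, and let a be an m×m matrix and b an m-vector whose entries are multivariate polynomials in the variables x₁,…,xₙ. Then for every solution φ : [0,T] → ℝⁿ of x' = f(x) and every y₀ ∈ ℝᵐ there exists a differentiable function ψ : [0,T] → ℝᵐ with ψ(0) = y₀ and ψ'(t) = a(φ(t))·ψ(t) + b(φ(t)) for all t ∈ [0,T]; in other words, the solution of the ghost equations y' = a(x)·y + b(x), which are linear in y, exists on the entire interval of existence of φ. -/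
/-!
The ghost system `y' = a(φ t) y + b(φ t)` is affine in `y`, with coefficients continuous on the
compact interval `[0, T]` because `φ` is. Its vector field is therefore Lipschitz in `y` with a
constant `K` independent of `t`, so Picard–Lindelöf produces a solution on any subinterval of
length at most `1 / (2K)`, whatever the initial value. Finitely many such pieces, glued end to
end, cover `[0, T]`.
-/

open MvPolynomial Set

open scoped NNReal

namespace IsIntegralCurveOn

variable {E : Type*} [NormedAddCommGroup E] [NormedSpace ℝ E]
  {γ γ₁ γ₂ : ℝ → E} {v : ℝ → E → E} {s u : Set ℝ}

theorem congr (h : IsIntegralCurveOn γ₁ v s) (heq : EqOn γ γ₁ s) :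
    IsIntegralCurveOn γ v s := fun t ht => by
  rw [heq ht]
  exact (h t ht).congr heq (heq ht)

theorem union_of_isClosed (hs : IsClosed s) (hu : IsClosed u) (h₁ : IsIntegralCurveOn γ v s)
    (h₂ : IsIntegralCurveOn γ v u) : IsIntegralCurveOn γ v (s ∪ u) := by
  intro t ht
  by_cases hts : t ∈ s <;> by_cases htu : t ∈ u
  · exact (h₁ t hts).union (h₂ t htu)
  · exact (h₁ t hts).union (HasFDerivWithinAt.of_notMem_closure (by rwa [hu.closure_eq]))
  · exact (HasFDerivWithinAt.of_notMem_closure (by rwa [hs.closure_eq])).union (h₂ t htu)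
  · exact absurd ht (by simp [hts, htu])

theorem Icc_piecewise {a b c : ℝ} (h₁ : IsIntegralCurveOn γ₁ v (Icc a b))
    (h₂ : IsIntegralCurveOn γ₂ v (Icc b c)) (hb : γ₁ b = γ₂ b) :
    IsIntegralCurveOn (fun t => if t ≤ b then γ₁ t else γ₂ t) v (Icc a c) := by
  refine (union_of_isClosed isClosed_Icc isClosed_Icc
    (h₁.congr fun t ht => if_pos ht.2) (h₂.congr fun t ht => ?_)).mono
    Icc_subset_Icc_union_Icc
  rcases ht.1.eq_or_lt with rfl | hlt
  · simp [hb]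
  · exact if_neg hlt.not_ge

end IsIntegralCurveOn

section Existence

variable {E : Type*} [NormedAddCommGroup E] [NormedSpace ℝ E] [CompleteSpace E]
  {v : ℝ → E → E} {K : ℝ≥0}

theorem exists_isIntegralCurveOn_Icc_of_lipschitzWith_of_mul_le {s e : ℝ} (hse : s ≤ e)
    (hlip : ∀ t ∈ Icc s e, LipschitzWith K (v t))
    (hcont : ∀ x, ContinuousOn (v · x) (Icc s e)) (hlen : K * (e - s) ≤ 1 / 2) (x₀ : E) :
    ∃ γ : ℝ → E, γ s = x₀ ∧ IsIntegralCurveOn γ v (Icc s e) := by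
  obtain ⟨B, hB⟩ := isCompact_Icc.exists_bound_of_continuousOn (hcont 0)
  have hB₀ : 0 ≤ B := (norm_nonneg _).trans (hB s (left_mem_Icc.2 hse))
  have hlen₀ : 0 ≤ e - s := sub_nonneg.2 hse
  -- `R` is chosen so that `L * (e - s) ≤ R`: a curve of speed `≤ L` stays in `closedBall x₀ R`
  set R : ℝ := 2 * (e - s) * (K * ‖x₀‖ + B)
  set L : ℝ := K * (‖x₀‖ + R) + B
  have hR : 0 ≤ R := by positivity
  have hL : 0 ≤ L := by positivity
  have hpl : IsPicardLindelof v (⟨s, left_mem_Icc.2 hse⟩ : Icc s e) x₀ ⟨R, hR⟩ 0 ⟨L, hL⟩ K := by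
    refine ⟨fun t ht => (hlip t ht).lipschitzOnWith, fun x _ => hcont x,
      fun t ht x hx => ?_, ?_⟩
    · have hx' : ‖x‖ ≤ ‖x₀‖ + R := by
        have hxR : ‖x - x₀‖ ≤ R := (dist_eq_norm x x₀).symm.trans_le hx
        linarith [norm_le_insert' x x₀]
      calc ‖v t x‖ ≤ ‖v t 0‖ + ‖v t x - v t 0‖ := norm_le_insert' _ _
        _ ≤ B + K * ‖x‖ := by
          gcongr
          · exact hB t ht
          · simpa [dist_eq_norm] using (hlip t ht).dist_le_mul x 0
        _ ≤ L := by simp only [L]; nlinarith [K.coe_nonneg]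
    · change L * max (e - s) (s - s) ≤ R - 0
      rw [sub_zero, sub_self, max_eq_left hlen₀]
      nlinarith [K.coe_nonneg, norm_nonneg x₀, mul_nonneg hlen₀ hR]
  exact hpl.exists_eq_forall_mem_Icc_hasDerivWithinAt₀

theorem exists_isIntegralCurveOn_Icc_of_lipschitzWith {tmin tmax : ℝ}
    (hlip : ∀ t ∈ Icc tmin tmax, LipschitzWith K (v t))
    (hcont : ∀ x, ContinuousOn (v · x) (Icc tmin tmax)) (x₀ : E) :
    ∃ γ : ℝ → E, γ tmin = x₀ ∧ IsIntegralCurveOn γ v (Icc tmin tmax) := by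
  rcases lt_or_ge tmax tmin with hlt | hle
  · exact ⟨fun _ => x₀, rfl, by simp [Icc_eq_empty_of_lt hlt, IsIntegralCurveOn]⟩
  set δ : ℝ := 1 / (2 * (K + 1))
  have hδ : 0 < δ := by positivity
  have hKδ : K * δ ≤ 1 / 2 := by
    rw [mul_one_div, div_le_div_iff₀ (by positivity) two_pos]
    linarith
  have hstep : ∀ s e, tmin ≤ s → s ≤ e → e ≤ tmax → e - s ≤ δ → ∀ x : E,
      ∃ γ : ℝ → E, γ s = x ∧ IsIntegralCurveOn γ v (Icc s e) := fun s e hs hse he hlen =>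
    have hsub : Icc s e ⊆ Icc tmin tmax := Icc_subset_Icc hs he
    exists_isIntegralCurveOn_Icc_of_lipschitzWith_of_mul_le hse (fun t ht => hlip t (hsub ht))
      (fun x => (hcont x).mono hsub) (by nlinarith [K.coe_nonneg])
  have hreach : ∀ k : ℕ, ∀ e ∈ Icc tmin tmax, e - tmin ≤ k * δ →
      ∃ γ : ℝ → E, γ tmin = x₀ ∧ IsIntegralCurveOn γ v (Icc tmin e) := by
    intro k
    induction k with
    | zero =>
      intro e he hk
      rw [Nat.cast_zero, zero_mul] at hk
      exact hstep tmin e le_rfl he.1 he.2 (by linarith) x₀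
    | succ k ih =>
      intro e he hk
      by_cases hshort : e - tmin ≤ δ
      · exact hstep tmin e le_rfl he.1 he.2 hshort x₀
      obtain ⟨γ, hγ₀, hγ⟩ := ih (e - δ) ⟨by linarith, by linarith [he.2]⟩
        (by push_cast at hk; linarith)
      obtain ⟨γ', hγ'₀, hγ'⟩ :=
        hstep (e - δ) e (by linarith) (by linarith) he.2 (sub_sub_cancel e δ).le (γ (e - δ))
      exact ⟨_, by simp [hγ₀, show tmin ≤ e - δ by linarith], hγ.Icc_piecewise hγ' hγ'₀.symm⟩
  obtain ⟨k, hk⟩ := exists_nat_ge ((tmax - tmin) / δ)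
  exact hreach k tmax ⟨hle, le_rfl⟩ ((div_le_iff₀ hδ).1 hk)

theorem exists_isIntegralCurveOn_Icc_of_affine {A : ℝ → E →L[ℝ] E} {c : ℝ → E} {tmin tmax : ℝ}
    (hA : ContinuousOn A (Icc tmin tmax)) (hc : ContinuousOn c (Icc tmin tmax)) (x₀ : E) :
    ∃ γ : ℝ → E, γ tmin = x₀ ∧
      IsIntegralCurveOn γ (fun t x => A t x + c t) (Icc tmin tmax) := by
  obtain ⟨K, hK⟩ := isCompact_Icc.exists_bound_of_continuousOn hA
  refine exists_isIntegralCurveOn_Icc_of_lipschitzWith (v := fun t x => A t x + c t)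
    (K := K.toNNReal) (fun t ht => ?_)
    (fun x => (hA.clm_apply continuousOn_const).add hc) x₀
  have hAt : ‖A t‖₊ ≤ K.toNNReal := by
    rw [← NNReal.coe_le_coe, coe_nnnorm]
    exact (hK t ht).trans (Real.le_coe_toNNReal K)
  refine LipschitzWith.of_dist_le_mul fun x y => ?_
  rw [dist_add_right]
  exact ((A t).lipschitz.weaken hAt).dist_le_mul x y

end Existence

theorem DG_sound_general {n : ℕ} (f : Fin n → MvPolynomial (Fin n) ℝ)
    (m : ℕ)
    (a : Fin m → Fin m → MvPolynomial (Fin n) ℝ) (b : Fin m → MvPolynomial (Fin n) ℝ)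
    (T : ℝ) (φ : ℝ → (Fin n → ℝ)) (hsol : IsSol f T φ)
    (y₀ : Fin m → ℝ) :
    ∃ ψ : ℝ → (Fin m → ℝ), ψ 0 = y₀ ∧
      ∀ t ∈ Icc (0 : ℝ) T, HasDerivWithinAt ψ
        (fun i => (∑ j, eval (φ t) (a i j) * ψ t j) + eval (φ t) (b i))
        (Icc (0 : ℝ) T) t := by
  have hφ : ContinuousOn φ (Icc 0 T) := fun t ht => (hsol t ht).continuousWithinAt
  let toCLM : Matrix (Fin m) (Fin m) ℝ →ₗ[ℝ] (Fin m → ℝ) →L[ℝ] (Fin m → ℝ) :=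
    LinearMap.toContinuousLinearMap.toLinearMap ∘ₗ Matrix.toLin'.toLinearMap
  have hA : Continuous fun x => toCLM (Matrix.of fun i j => eval x (a i j)) :=
    toCLM.continuous_of_finiteDimensional.comp (continuous_matrix fun i j => continuous_eval _)
  have hb : Continuous fun x i => eval x (b i) := continuous_pi fun i => continuous_eval _
  obtain ⟨ψ, hψ₀, hψ⟩ :=
    exists_isIntegralCurveOn_Icc_of_affine (hA.comp_continuousOn hφ) (hb.comp_continuousOn hφ) y₀
  refine ⟨ψ, hψ₀, fun t ht => (hψ t ht).congr_deriv (funext fun i => ?_)⟩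
  simp [toCLM, Matrix.mulVec, dotProduct]

/-- Semantic soundness of vectorial differential ghosts (DG): the linear ghost ODE
`y' = a(x)·y + b(x)` has a solution on the whole interval of existence of `φ`. -/
theorem DG_sound {n : ℕ} (hn : 1 ≤ n) (f : Fin n → MvPolynomial (Fin n) ℝ)
    (m : ℕ) (hm : 1 ≤ m)
    (a : Fin m → Fin m → MvPolynomial (Fin n) ℝ) (b : Fin m → MvPolynomial (Fin n) ℝ)
    (T : ℝ) (hT : 0 ≤ T) (φ : ℝ → (Fin n → ℝ)) (hsol : IsSol f T φ)
    (y₀ : Fin m → ℝ) :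
    ∃ ψ : ℝ → (Fin m → ℝ), ψ 0 = y₀ ∧
      ∀ t ∈ Icc (0 : ℝ) T, HasDerivWithinAt ψ
        (fun i => (∑ j, eval (φ t) (a i j) * ψ t j) + eval (φ t) (b i))
        (Icc (0 : ℝ) T) t :=
  DG_sound_general f m a b T φ hsol y₀
end
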